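/- arXiv:2001.08876 — 9 statements merged into one kernel-verified Lean document; each statement's English description precedes it below -/
import Mathlib

section
/- Let a ∈ (0,1) and define θ(v) = (v(v²-a) + 2v)/√((v²-a)² + 4v²) - v. Then for all v ∈ (0,1) one has 0 ≤ θ(v) < 1 - (4/(5+√5))·v. -/
theorem stmt_4 (a : ℝ) (ha : a ∈ Set.Ioo (0 : ℝ) 1)
    (θ : ℝ → ℝ)
    (hθ : ∀ v, θ v = (v * (v ^ 2 - a) + 2 * v) / Real.sqrt ((v ^ 2 - a) ^ 2 + 4 * v ^ 2) - v) :
    ∀ v ∈ Set.Ioo (0 : ℝ) 1, 0 ≤ θ v ∧ θ v < 1 - 4 / (5 + Real.sqrt 5) * v := by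
  obtain ⟨ha0, ha1⟩ := ha
  intro v hv
  obtain ⟨hv0, hv1⟩ := hv
  have hr2 : (Real.sqrt 5) ^ 2 = 5 := Real.sq_sqrt (by norm_num)
  have hr_gt : 2 < Real.sqrt 5 := by nlinarith [Real.sqrt_nonneg 5]
  set r := Real.sqrt 5 with hrdef
  clear_value r
  set b : ℝ := v ^ 2 - a with hb
  clear_value b
  have hD : (0:ℝ) < b ^ 2 + 4 * v ^ 2 := by positivity
  have hS0 : 0 < Real.sqrt (b ^ 2 + 4 * v ^ 2) := Real.sqrt_pos.mpr hD
  have hSsq : (Real.sqrt (b ^ 2 + 4 * v ^ 2)) ^ 2 = b ^ 2 + 4 * v ^ 2 := Real.sq_sqrt hD.le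
  set S := Real.sqrt (b ^ 2 + 4 * v ^ 2) with hS
  clear_value S
  have hθv : θ v = v * (b + 2) / S - v := by
    have e1 : v * (v ^ 2 - a) + 2 * v = v * (b + 2) := by rw [hb]; ring
    have e2 : (v ^ 2 - a) ^ 2 + 4 * v ^ 2 = b ^ 2 + 4 * v ^ 2 := by rw [hb]
    rw [hθ v, e1, e2, ← hS]
  have hb2 : (1:ℝ) < b + 2 := by nlinarith
  constructor
  · -- lower bound
    rw [hθv]
    have hSle : S ≤ b + 2 := by
      nlinarith [hSsq, hS0]
    have : v ≤ v * (b + 2) / S := by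
      rw [le_div_iff₀ hS0]
      nlinarith
    linarith
  · -- upper bound
    have hA : (0:ℝ) < 5 + 2 * r * v - 4 * v ^ 2 := by nlinarith
    have hg : (0:ℝ) < 10 * r - 6 * r * v ^ 2 - 4 * v ^ 3 := by nlinarith
    have hidentity : (5 + 2*r*v - 4*v^2) * ((r + v) ^ 2 * (b ^ 2 + 4 * v ^ 2)
          - 5 * (v * (b + 2)) ^ 2)
        = ((5 + 2*r*v - 4*v^2) * b - 10 * v^2) ^ 2
          + 4 * v^3 * (10 * r - 6 * r * v ^ 2 - 4 * v ^ 3) := by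
      linear_combination ((5 + 2*r*v - 4*v^2) * (b^2 + 4*v^2) + 16*v^4) * hr2
    have key : 5 * (v * (b + 2)) ^ 2 < (r + v) ^ 2 * (b ^ 2 + 4 * v ^ 2) := by
      nlinarith [hidentity, hA, sq_nonneg ((5 + 2*r*v - 4*v^2) * b - 10 * v^2),
        mul_pos (by positivity : (0:ℝ) < 4 * v ^ 3) hg]
    have hr0 : (0:ℝ) < r := by linarith
    have hrv : (0:ℝ) < r + v := by linarith
    have hlt : v * (b + 2) < (r + v) / r * S := by
      apply lt_of_pow_lt_pow_left₀ 2 (by positivity)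
      have h5 : ((r + v) / r * S) ^ 2 = (r + v) ^ 2 * (b ^ 2 + 4 * v ^ 2) / 5 := by
        rw [mul_pow, div_pow, hr2, hSsq]
        ring
      rw [h5]
      linarith
    have hθlt : θ v < (r + v) / r - v := by
      rw [hθv]
      have : v * (b + 2) / S < (r + v) / r := by
        rw [div_lt_iff₀ hS0]
        linarith
      linarith
    have h1 : (4:ℝ) / (5 + r) = (r - 1) / r := by
      rw [div_eq_div_iff (by positivity) (by positivity)]
      linear_combination -hr2
    have heq : (r + v) / r - v = 1 - 4 / (5 + r) * v := by
      rw [h1]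
      field_simp
      ring
    linarith [heq ▸ hθlt]
end

section
/- Let a ∈ (0,1), δ ≥ 1, and τ(v) = (√((v²/δ - a)² + 4v²/δ) - (v²/δ - a))/2. Then the fixed point ξ(δ) = (√((δ-1)² + 4δa) - (δ-1))/2 satisfies |τ(v) - ξ(δ)| ≤ (1/√δ)·(1 - (4/(5+√5))·(a/√δ))·|v - ξ(δ)| for all v ∈ [a, 1). -/
/-!
Write `s = √δ`. The step `t = τ v` and the fixed point `ξ` are the nonnegative roots of
`s² t (t - a) = v² (1 - t)` and `s² (ξ - a) = ξ (1 - ξ)`, and subtracting the two gives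
`(t - ξ) D = (v - ξ)(v + ξ)(1 - ξ)` with `D = s² (t + ξ - a) + v²`. The cheap lower bound
`s² t ≥ s² a / 2 + s v - v²` turns `s² (v + ξ)(1 - ξ) ≤ (s - a) D` into a polynomial inequality,
which is a sum of nonnegative terms modulo the fixed-point equation. This gives the contraction
factor `(1 / s)(1 - a / s)`, and `4 / (5 + √5) ≤ 1`.
-/

open Real

theorem sq_add_mul_eq_and_nonneg_of_eq_sqrt {b c x : ℝ} (hc : 0 ≤ c)
    (hx : x = (√(b ^ 2 + 4 * c) - b) / 2) : x ^ 2 + b * x = c ∧ 0 ≤ x := by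
  have hsq := sq_sqrt (by positivity : 0 ≤ b ^ 2 + 4 * c)
  have hb : b ≤ √(b ^ 2 + 4 * c) := (le_abs_self b).trans (abs_le_sqrt (by linarith))
  subst hx
  exact ⟨by linear_combination hsq / 4, by linarith⟩

section Step

variable {a s ξ t v : ℝ}

theorem fixedPoint_mem_Ioo (ha : a ∈ Set.Ioo 0 1) (hs : 1 ≤ s) (hξ0 : 0 ≤ ξ)
    (hξ : s ^ 2 * (ξ - a) = ξ * (1 - ξ)) : ξ ∈ Set.Ioo a 1 := by
  obtain ⟨ha0, ha1⟩ := ha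
  have hs2 : 1 ≤ s ^ 2 := one_le_pow₀ hs
  have hlow : 0 < (ξ - a) * (ξ + a + s ^ 2 - 1) := by nlinarith [mul_pos ha0 (sub_pos.2 ha1)]
  have hup : 0 < (1 - ξ) * (ξ + s ^ 2) := by nlinarith [mul_pos ha0 (sub_pos.2 ha1)]
  exact ⟨sub_pos.1 (pos_of_mul_pos_left hlow (by linarith)),
    sub_pos.1 (pos_of_mul_pos_left hup (by linarith))⟩

theorem le_step (ha1 : a < 1) (hv : 0 < v) (ht0 : 0 ≤ t)
    (ht : s ^ 2 * t * (t - a) = v ^ 2 * (1 - t)) : a ≤ t := by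
  by_contra! hta
  nlinarith [mul_nonneg (mul_nonneg (sq_nonneg s) ht0) (sub_nonneg.2 hta.le),
    mul_pos (pow_pos hv 2) (by linarith : 0 < 1 - t)]

theorem step_lower_bound (hs : 1 ≤ s) (ha0 : 0 < a) (hv0 : 0 ≤ v) (hv1 : v ≤ 1) (hat : a ≤ t)
    (ht : s ^ 2 * t * (t - a) = v ^ 2 * (1 - t)) :
    s ^ 2 * a / 2 + s * v - v ^ 2 ≤ s ^ 2 * t := by
  -- `q(T) = T (T - s² a) - v² (s² - T)` vanishes at `T = s² t` and factors as below
  have hfac : (s ^ 2 * t - (s ^ 2 * a / 2 + s * v - v ^ 2)) * (s ^ 2 * t - s ^ 2 * a / 2 + s * v)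
      = s * (s * (s * a) ^ 2 / 4 + v ^ 3 - s * a * v ^ 2 / 2) := by
    linear_combination s ^ 2 * ht
  have hv4 : v ^ 4 ≤ v ^ 3 := pow_le_pow_of_le_one hv0 hv1 (by norm_num)
  have hrhs : 0 ≤ s * (s * (s * a) ^ 2 / 4 + v ^ 3 - s * a * v ^ 2 / 2) := by
    refine mul_nonneg (by linarith) ?_
    nlinarith [sq_nonneg (s * a - v ^ 2), mul_nonneg (sub_nonneg.2 hs) (sq_nonneg (s * a))]
  have hpos : 0 < s ^ 2 * t - s ^ 2 * a / 2 + s * v := by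
    nlinarith [mul_le_mul_of_nonneg_left hat (sq_nonneg s), mul_pos (by positivity : 0 < s ^ 2) ha0,
      mul_nonneg (by linarith : 0 ≤ s) hv0]
  linarith [nonneg_of_mul_nonneg_left (hfac ▸ hrhs) hpos]

theorem step_sub_fixedPoint_mul_eq (hξ : s ^ 2 * (ξ - a) = ξ * (1 - ξ))
    (ht : s ^ 2 * t * (t - a) = v ^ 2 * (1 - t)) :
    (t - ξ) * (s ^ 2 * (t + ξ - a) + v ^ 2) = (v - ξ) * ((v + ξ) * (1 - ξ)) := by
  linear_combination ht - ξ * hξ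

theorem contraction_polynomial_le (hs : 1 ≤ s) (ha0 : 0 ≤ a) (hav : a ≤ v) (haξ : a ≤ ξ)
    (hξ : s ^ 2 * (ξ - a) = ξ * (1 - ξ)) :
    s * ((v + ξ) * (1 - ξ)) ≤ (s - a) * (s * ξ + v - s * a / 2) := by
  have hsξ : a ≤ s * ξ := by nlinarith
  have hsos : (s - a) * (s * ξ + v - s * a / 2) - s * ((v + ξ) * (1 - ξ)) =
      (v - a) * (s * ξ - a) + ξ * (s - 1) ^ 2 / 2 + (s - 1 / 2) * ((ξ - a) * (ξ + a))
        + 3 / 2 * (s - 1) * a ^ 2 := by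
    linear_combination hξ / 2
  have h1 := mul_nonneg (sub_nonneg.2 hav) (sub_nonneg.2 hsξ)
  have h2 := mul_nonneg (ha0.trans haξ) (sq_nonneg (s - 1))
  have h3 := mul_nonneg (by linarith : 0 ≤ s - 1 / 2)
    (mul_nonneg (sub_nonneg.2 haξ) (by linarith : 0 ≤ ξ + a))
  have h4 := mul_nonneg (sub_nonneg.2 hs) (sq_nonneg a)
  linarith

theorem sq_mul_abs_step_sub_fixedPoint_le (hs : 1 ≤ s) (ha : a ∈ Set.Ioo 0 1) (hav : a ≤ v)
    (hv1 : v < 1) (hξ0 : 0 ≤ ξ) (ht0 : 0 ≤ t) (hξ : s ^ 2 * (ξ - a) = ξ * (1 - ξ))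
    (ht : s ^ 2 * t * (t - a) = v ^ 2 * (1 - t)) :
    s ^ 2 * |t - ξ| ≤ (s - a) * |v - ξ| := by
  obtain ⟨haξ, hξ1⟩ := fixedPoint_mem_Ioo ha hs hξ0 hξ
  obtain ⟨ha0, ha1⟩ := ha
  have hv0 : 0 < v := ha0.trans_le hav
  have hat : a ≤ t := le_step ha1 hv0 ht0 ht
  set D := s ^ 2 * (t + ξ - a) + v ^ 2
  have hD : s * (s * ξ + v - s * a / 2) ≤ D := by
    linarith [step_lower_bound hs ha0 hv0.le hv1.le hat ht]
  have hD0 : 0 < D := by nlinarith [mul_pos (by positivity : 0 < s ^ 2) (ha0.trans haξ)]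
  have hnum : s ^ 2 * ((v + ξ) * (1 - ξ)) ≤ (s - a) * D :=
    calc s ^ 2 * ((v + ξ) * (1 - ξ)) = s * (s * ((v + ξ) * (1 - ξ))) := by ring
      _ ≤ s * ((s - a) * (s * ξ + v - s * a / 2)) :=
        mul_le_mul_of_nonneg_left (contraction_polynomial_le hs ha0.le hav haξ.le hξ) (by linarith)
      _ = (s - a) * (s * (s * ξ + v - s * a / 2)) := by ring
      _ ≤ (s - a) * D := mul_le_mul_of_nonneg_left hD (by linarith)
  have habs : |t - ξ| * D = |v - ξ| * ((v + ξ) * (1 - ξ)) := by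
    rw [← abs_of_pos hD0, ← abs_of_nonneg (by nlinarith : 0 ≤ (v + ξ) * (1 - ξ)), ← abs_mul,
      ← abs_mul, step_sub_fixedPoint_mul_eq hξ ht]
  refine le_of_mul_le_mul_right ?_ hD0
  calc s ^ 2 * |t - ξ| * D = |v - ξ| * (s ^ 2 * ((v + ξ) * (1 - ξ))) := by
        rw [mul_assoc, habs]; ring
    _ ≤ |v - ξ| * ((s - a) * D) := mul_le_mul_of_nonneg_left hnum (abs_nonneg _)
    _ = (s - a) * |v - ξ| * D := by ring

end Step

theorem stmt_5 (a δ : ℝ) (ha : a ∈ Set.Ioo (0 : ℝ) 1) (hδ : 1 ≤ δ)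
    (τ : ℝ → ℝ)
    (hτ : ∀ v, τ v = (Real.sqrt ((v ^ 2 / δ - a) ^ 2 + 4 * v ^ 2 / δ) - (v ^ 2 / δ - a)) / 2)
    (ξδ : ℝ) (hξδ : ξδ = (Real.sqrt ((δ - 1) ^ 2 + 4 * δ * a) - (δ - 1)) / 2) :
    ∀ v ∈ Set.Ico a 1,
      |τ v - ξδ| ≤ (1 / Real.sqrt δ) * (1 - 4 / (5 + Real.sqrt 5) * (a / Real.sqrt δ)) * |v - ξδ| := by
  rintro v ⟨hav, hv1⟩
  have hδ0 : 0 < δ := by linarith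
  set s := √δ
  have hδs : δ = s ^ 2 := (sq_sqrt hδ0.le).symm
  have hs : 1 ≤ s := one_le_sqrt.2 hδ
  have ha0 : 0 < a := ha.1
  obtain ⟨hξq, hξ0⟩ := sq_add_mul_eq_and_nonneg_of_eq_sqrt (b := δ - 1) (c := δ * a) (x := ξδ)
    (by positivity) (by rw [hξδ, mul_assoc])
  obtain ⟨htq, ht0⟩ := sq_add_mul_eq_and_nonneg_of_eq_sqrt (b := v ^ 2 / δ - a) (c := v ^ 2 / δ)
    (x := τ v) (by positivity) (by rw [hτ, mul_div_assoc])
  have hξ : s ^ 2 * (ξδ - a) = ξδ * (1 - ξδ) := by rw [← hδs]; linear_combination hξq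
  have ht : s ^ 2 * τ v * (τ v - a) = v ^ 2 * (1 - τ v) := by
    rw [← hδs]; field_simp at htq; linear_combination htq
  have hc : 4 / (5 + √5) ≤ 1 := by rw [div_le_one (by positivity)]; linarith [sqrt_nonneg 5]
  calc |τ v - ξδ| ≤ (s - a) / s ^ 2 * |v - ξδ| := by
        rw [div_mul_eq_mul_div, le_div_iff₀ (by positivity)]
        linarith [sq_mul_abs_step_sub_fixedPoint_le hs ha hav hv1 hξ0 ht0 hξ ht]
    _ = 1 / s * (1 - 1 * (a / s)) * |v - ξδ| := by field_simp
    _ ≤ _ := by gcongr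
end

section
/- Let a ∈ (0,1), δ ≥ 1, and let (ξₜ) be defined by ξ₀ ≥ 0 arbitrary and ξ_{t+1}(ξ_{t+1}-a)/(1-ξ_{t+1}) = ξₜ²/δ with ξ_{t+1} ∈ [a,1). Then ξₜ ∈ [a,1) for all t ≥ 1, the sequence converges to ξ(δ) = (√((δ-1)² + 4δa) - (δ-1))/2, and |ξₜ - ξ(δ)| ≤ ((1/√δ)(1 - (4/(5+√5))·(a/√δ)))ᵗ·|ξ₀ - ξ(δ)| for all t. -/
/-!
Write `s = √δ`, `x = ξₜ`, `y = ξₜ₊₁`, and let `e = ξ(δ)`, the positive root of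
`e² + (δ - 1) e = δ a`, which lies in `(a, 1)`. Subtracting this fixed-point equation from the
recurrence `δ y (y - a) = x² (1 - y)` gives
  `(y - e) (δ (y + e - a) + x²) = (x - e) (x + e) (1 - e)`,
so one step multiplies the error by `(x + e)(1 - e) / (δ (y + e - a) + x²)`. After multiplying
numerator and denominator by `1 - y`, the denominator becomes `δ ((y - a) + e (1 - y))`, and the
AM-GM bound `x (1 - y) = s √(y (y - a) (1 - y)) ≤ s (y - a/2)(1 - y/2)` eliminates `x`. What remains
is a polynomial inequality in `s, e, a, y`, which holds with the rational constant
`553/1000 > 4/(5 + √5) = 1 - 1/√5`. Geometric decay of the error gives the rate and the limit.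
-/

open Filter Topology

theorem positiveRoot_fixed_and_mem_Ioo {a δ e : ℝ} (ha0 : 0 < a) (ha1 : a < 1) (hδ : 0 < δ)
    (he : e = (√((δ - 1) ^ 2 + 4 * δ * a) - (δ - 1)) / 2) :
    e ^ 2 + (δ - 1) * e = δ * a ∧ a < e ∧ e < 1 := by
  have hr := Real.sq_sqrt (by positivity : (0 : ℝ) ≤ (δ - 1) ^ 2 + 4 * δ * a)
  have hfix : e ^ 2 + (δ - 1) * e = δ * a := by rw [he]; linear_combination hr / 4
  have he0 : 0 < e := by
    have : δ - 1 < √((δ - 1) ^ 2 + 4 * δ * a) := Real.lt_sqrt_of_sq_lt (by nlinarith)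
    linarith
  have he1 : e < 1 := by nlinarith
  exact ⟨hfix, by nlinarith [mul_pos he0 (sub_pos.mpr he1)], he1⟩

theorem four_div_five_add_sqrt_five_le : 4 / (5 + √5) ≤ (553 / 1000 : ℝ) := by
  have h5 : (2236 / 1000 : ℝ) ≤ √5 := Real.le_sqrt_of_sq_le (by norm_num)
  rw [div_le_iff₀ (by positivity)]
  linarith

theorem contractionFactor_mem_Ico {a s c : ℝ} (ha0 : 0 < a) (ha1 : a < 1) (hs : 1 ≤ s)
    (hc0 : 0 < c) (hc1 : c ≤ 1) : 1 / s * (1 - c * (a / s)) ∈ Set.Ico 0 1 := by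
  have hs0 : 0 < s := by linarith
  have has : a / s ≤ a := div_le_self ha0.le hs
  have hcas : 0 < c * (a / s) := by positivity
  have hinv : 1 / s ≤ 1 := by rw [div_le_one hs0]; exact hs
  constructor
  · exact mul_nonneg (by positivity) (by nlinarith)
  · nlinarith [one_div_pos.mpr hs0]

theorem dist_le_pow_mul_of_dist_succ_le {X : Type*} [PseudoMetricSpace X] {u : ℕ → X} {L : X}
    {q : ℝ} (hq : 0 ≤ q) (h : ∀ t, dist (u (t + 1)) L ≤ q * dist (u t) L) (t : ℕ) :
    dist (u t) L ≤ q ^ t * dist (u 0) L := by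
  induction t with
  | zero => simp
  | succ n ih =>
    calc dist (u (n + 1)) L ≤ q * dist (u n) L := h n
      _ ≤ q * (q ^ n * dist (u 0) L) := by gcongr
      _ = q ^ (n + 1) * dist (u 0) L := by ring

theorem tendsto_of_dist_succ_le {X : Type*} [PseudoMetricSpace X] {u : ℕ → X} {L : X}
    {q : ℝ} (hq0 : 0 ≤ q) (hq1 : q < 1) (h : ∀ t, dist (u (t + 1)) L ≤ q * dist (u t) L) :
    Tendsto u atTop (𝓝 L) := by
  rw [tendsto_iff_dist_tendsto_zero]
  refine squeeze_zero (fun t => dist_nonneg) (dist_le_pow_mul_of_dist_succ_le hq0 h) ?_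
  simpa using (tendsto_pow_atTop_nhds_zero_of_lt_one hq0 hq1).mul_const (dist (u 0) L)

section OneStep

variable {a s c e x y : ℝ}

theorem mul_one_sub_le_of_rec (ha : 0 ≤ a) (hs : 0 ≤ s) (hx : 0 ≤ x) (hay : a ≤ y)
    (hy1 : y ≤ 1) (hrec : s ^ 2 * (y * (y - a)) = x ^ 2 * (1 - y)) :
    x * (1 - y) ≤ s * (y - a / 2) * (1 - y / 2) := by
  have hamgm : y * (y - a) * (1 - y) ≤ (y - a / 2) ^ 2 * (1 - y / 2) ^ 2 :=
    calc y * (y - a) * (1 - y) ≤ (y - a / 2) ^ 2 * (1 - y) := by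
          gcongr ?_ * _
          nlinarith [sq_nonneg a]
      _ ≤ (y - a / 2) ^ 2 * (1 - y / 2) ^ 2 := by gcongr; nlinarith [sq_nonneg y]
  have hrhs : 0 ≤ s * (y - a / 2) * (1 - y / 2) :=
    mul_nonneg (mul_nonneg hs (by linarith)) (by linarith)
  refine (pow_le_pow_iff_left₀ (mul_nonneg hx (by linarith)) hrhs two_ne_zero).mp ?_
  calc (x * (1 - y)) ^ 2 = s ^ 2 * (y * (y - a) * (1 - y)) := by
        linear_combination (y - 1) * hrec
    _ ≤ s ^ 2 * ((y - a / 2) ^ 2 * (1 - y / 2) ^ 2) := by gcongr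
    _ = (s * (y - a / 2) * (1 - y / 2)) ^ 2 := by ring

/-- Modulo the fixed-point equation, `s ^ 4` times the gap in `contraction_polynomial_le` is
`1 - e` times this polynomial. -/
theorem contraction_certificate_nonneg (ha : 0 ≤ a) (hay : a ≤ y) (he0 : 0 ≤ e) (he1 : e ≤ 1)
    (hs : 1 ≤ s) :
    0 ≤ 553 / 1000 * e * s ^ 2 * (y - a) + s ^ 3 * e * ((s - 1) ^ 2 + e) / 2
      + e * y * s ^ 4 * (447 / 1000 - s / 4) + s ^ 3 * e * y * (1 - e) / 4 + s ^ 5 * y ^ 2 / 2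
      - 553 / 1000 * e ^ 2 * s ^ 2 * y := by
  have hy0 : 0 ≤ y := ha.trans hay
  have hs0 : 0 < s := by linarith
  nlinarith [mul_nonneg (by positivity : 0 ≤ e * s ^ 3 / 2) (sq_nonneg (s - 1 - s * y / 4)),
    mul_nonneg (by positivity : (0 : ℝ) ≤ 15 / 32 * s ^ 3) (sq_nonneg (e - s * y)),
    mul_nonneg (by positivity : 0 ≤ s ^ 5 * y ^ 2) (sub_nonneg.mpr he1),
    mul_nonneg (by positivity : 0 ≤ s ^ 3 * e * y) (sub_nonneg.mpr he1),
    mul_nonneg (by positivity : 0 ≤ e * y * s ^ 2) (by nlinarith : 0 ≤ s ^ 2 - e),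
    mul_nonneg (by positivity : 0 ≤ e * s ^ 2) (sub_nonneg.mpr hay),
    (by positivity : 0 ≤ s ^ 3 * e ^ 2), (by positivity : 0 ≤ e * y * s ^ 4)]

theorem contraction_polynomial_le_s6 (ha : 0 ≤ a) (hay : a ≤ y) (he0 : 0 ≤ e) (he1 : e ≤ 1)
    (hs : 1 ≤ s) (hfix : e ^ 2 + (s ^ 2 - 1) * e = s ^ 2 * a) :
    (1 - e) * (s * (y - a / 2) * (1 - y / 2)) + e * (1 - e) * (1 - y)
      ≤ (s - 553 / 1000 * a) * ((y - a) + e * (1 - y)) := by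
  have hs4 : 0 < s ^ 4 := by positivity
  refine le_of_mul_le_mul_left (sub_nonneg.mp ?_) hs4
  rw [← mul_sub]
  convert mul_nonneg (sub_nonneg.mpr he1) (contraction_certificate_nonneg ha hay he0 he1 hs) using 1
  linear_combination (-(553 / 1000) * s ^ 2 * a - 1 / 4 * s ^ 3 * e * y + 1 / 2 * s ^ 3 * e
    + 1 / 4 * s ^ 3 * y + 1 / 2 * s ^ 3 - 553 / 1000 * s ^ 2 * e * y + 553 / 1000 * s ^ 2 * y)
    * hfix

theorem mul_one_sub_le_contractionFactor_mul (ha : 0 < a) (hs : 1 ≤ s) (hc : c ≤ 553 / 1000)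
    (hfix : e ^ 2 + (s ^ 2 - 1) * e = s ^ 2 * a) (hae : a < e) (he1 : e < 1) (hx : 0 ≤ x)
    (hay : a ≤ y) (hy1 : y < 1) (hrec : s ^ 2 * (y * (y - a)) = x ^ 2 * (1 - y)) :
    (x + e) * (1 - e) ≤ 1 / s * (1 - c * (a / s)) * (s ^ 2 * (y + e - a) + x ^ 2) := by
  have he0 : 0 ≤ e := (ha.trans hae).le
  have hq : 1 / s * (1 - c * (a / s)) * s ^ 2 = s - c * a := by field_simp
  refine le_of_mul_le_mul_right ?_ (sub_pos.mpr hy1)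
  calc (x + e) * (1 - e) * (1 - y) = (1 - e) * (x * (1 - y)) + e * (1 - e) * (1 - y) := by ring
    _ ≤ (1 - e) * (s * (y - a / 2) * (1 - y / 2)) + e * (1 - e) * (1 - y) := by
        gcongr ?_ + _
        exact mul_le_mul_of_nonneg_left
          (mul_one_sub_le_of_rec ha.le (by linarith) hx hay hy1.le hrec) (by linarith)
    _ ≤ (s - 553 / 1000 * a) * ((y - a) + e * (1 - y)) :=
        contraction_polynomial_le_s6 ha.le hay he0 he1.le hs hfix
    _ ≤ (s - c * a) * ((y - a) + e * (1 - y)) := by gcongr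
    _ = 1 / s * (1 - c * (a / s)) * (s ^ 2 * (y + e - a) + x ^ 2) * (1 - y) := by
        linear_combination (-((y - a) + e * (1 - y))) * hq + 1 / s * (1 - c * (a / s)) * hrec

theorem abs_sub_le_contractionFactor_mul (ha : 0 < a) (hs : 1 ≤ s) (hc : c ≤ 553 / 1000)
    (hfix : e ^ 2 + (s ^ 2 - 1) * e = s ^ 2 * a) (hae : a < e) (he1 : e < 1) (hx : 0 ≤ x)
    (hy : y ∈ Set.Ico a 1) (hrec : y * (y - a) / (1 - y) = x ^ 2 / s ^ 2) :
    |y - e| ≤ 1 / s * (1 - c * (a / s)) * |x - e| := by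
  obtain ⟨hay, hy1⟩ := hy
  have hrec' : s ^ 2 * (y * (y - a)) = x ^ 2 * (1 - y) := by
    rw [div_eq_div_iff (by linarith) (by positivity)] at hrec
    linarith
  have he0 : 0 < e := ha.trans hae
  have hden : 0 < s ^ 2 * (y + e - a) + x ^ 2 := by nlinarith
  have herr : (y - e) * (s ^ 2 * (y + e - a) + x ^ 2) = (x - e) * ((x + e) * (1 - e)) := by
    linear_combination hrec' - e * hfix
  rw [← mul_le_mul_iff_of_pos_right hden]
  have hnum : 0 ≤ (x + e) * (1 - e) := mul_nonneg (by linarith) (by linarith)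
  calc |y - e| * (s ^ 2 * (y + e - a) + x ^ 2) = |(y - e) * (s ^ 2 * (y + e - a) + x ^ 2)| := by
        rw [abs_mul, abs_of_pos hden]
    _ = |x - e| * ((x + e) * (1 - e)) := by rw [herr, abs_mul, abs_of_nonneg hnum]
    _ ≤ |x - e| * (1 / s * (1 - c * (a / s)) * (s ^ 2 * (y + e - a) + x ^ 2)) :=
        mul_le_mul_of_nonneg_left
          (mul_one_sub_le_contractionFactor_mul ha hs hc hfix hae he1 hx hay hy1 hrec')
          (abs_nonneg _)
    _ = 1 / s * (1 - c * (a / s)) * |x - e| * (s ^ 2 * (y + e - a) + x ^ 2) := by ring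

end OneStep

theorem stmt_6 (a δ : ℝ) (ha : a ∈ Set.Ioo (0 : ℝ) 1) (hδ : 1 ≤ δ)
    (ξ : ℕ → ℝ) (h0 : 0 ≤ ξ 0)
    (hmem : ∀ t, ξ (t + 1) ∈ Set.Ico a 1)
    (hrec : ∀ t, ξ (t + 1) * (ξ (t + 1) - a) / (1 - ξ (t + 1)) = (ξ t) ^ 2 / δ)
    (ξδ : ℝ) (hξδ : ξδ = (Real.sqrt ((δ - 1) ^ 2 + 4 * δ * a) - (δ - 1)) / 2) :
    (∀ t : ℕ, 1 ≤ t → ξ t ∈ Set.Ico a 1) ∧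
      Filter.Tendsto ξ Filter.atTop (nhds ξδ) ∧
      ∀ t : ℕ,
        |ξ t - ξδ| ≤ ((1 / Real.sqrt δ) * (1 - 4 / (5 + Real.sqrt 5) * (a / Real.sqrt δ))) ^ t *
          |ξ 0 - ξδ| := by
  obtain ⟨ha0, ha1⟩ := ha
  obtain ⟨hfix, hae, he1⟩ := positiveRoot_fixed_and_mem_Ioo ha0 ha1 (by linarith) hξδ
  obtain ⟨s, hs, rfl⟩ : ∃ s, 1 ≤ s ∧ δ = s ^ 2 :=
    ⟨√δ, Real.one_le_sqrt.mpr hδ, (Real.sq_sqrt (by linarith)).symm⟩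
  rw [Real.sqrt_sq (by linarith)]
  have hc := four_div_five_add_sqrt_five_le
  obtain ⟨hq0, hq1⟩ :=
    contractionFactor_mem_Ico (c := 4 / (5 + √5)) ha0 ha1 hs (by positivity) (by linarith)
  have hξ0 : ∀ t, 0 ≤ ξ t := by
    rintro (_ | t)
    exacts [h0, ha0.le.trans (hmem t).1]
  have hstep : ∀ t, dist (ξ (t + 1)) ξδ ≤ 1 / s * (1 - 4 / (5 + √5) * (a / s)) * dist (ξ t) ξδ :=
    fun t => abs_sub_le_contractionFactor_mul ha0 hs hc hfix hae he1 (hξ0 t) (hmem t) (hrec t)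
  refine ⟨fun t ht => ?_, tendsto_of_dist_succ_le hq0 hq1 hstep,
    dist_le_pow_mul_of_dist_succ_le hq0 hstep⟩
  obtain ⟨n, rfl⟩ := Nat.exists_eq_add_of_le' ht
  exact hmem n
end

section
/- Let a ∈ (0,1) and write δ = 1 + d with 0 ≤ d ≤ 3/(1 + 2/a). Then 0 ≤ √a - ξ(1+d) ≤ d/2, where ξ(δ) = (√((δ-1)² + 4δa) - (δ-1))/2. -/
theorem stmt_8 (a : ℝ) (ha : a ∈ Set.Ioo (0 : ℝ) 1)
    (d : ℝ) (hd : 0 ≤ d) (hd' : d ≤ 3 / (1 + 2 / a))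
    (ξ : ℝ → ℝ)
    (hξ : ∀ δ, ξ δ = (Real.sqrt ((δ - 1) ^ 2 + 4 * δ * a) - (δ - 1)) / 2) :
    0 ≤ Real.sqrt a - ξ (1 + d) ∧ Real.sqrt a - ξ (1 + d) ≤ d / 2 := by
  obtain ⟨ha0, ha1⟩ := ha
  have hsa : 0 ≤ Real.sqrt a := Real.sqrt_nonneg a
  have hsa2 : Real.sqrt a ^ 2 = a := Real.sq_sqrt ha0.le
  have hasa : a ≤ Real.sqrt a := by
    nlinarith [Real.sq_sqrt ha0.le, Real.sqrt_nonneg a, sq_nonneg (Real.sqrt a - 1)]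
  rw [hξ]
  have harg : (0:ℝ) ≤ (1 + d - 1) ^ 2 + 4 * (1 + d) * a := by nlinarith
  constructor
  · -- need √((d)^2 + 4(1+d)a) ≤ 2√a + d
    have h1 : Real.sqrt ((1 + d - 1) ^ 2 + 4 * (1 + d) * a) ≤ 2 * Real.sqrt a + d := by
      rw [show ((1:ℝ) + d - 1) = d by ring]
      have key : d ^ 2 + 4 * (1 + d) * a ≤ (2 * Real.sqrt a + d) ^ 2 := by nlinarith
      calc Real.sqrt (d ^ 2 + 4 * (1 + d) * a)
          ≤ Real.sqrt ((2 * Real.sqrt a + d) ^ 2) := Real.sqrt_le_sqrt key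
        _ = 2 * Real.sqrt a + d := Real.sqrt_sq (by positivity)
    linarith
  · -- need 2√a ≤ √(d^2 + 4(1+d)a)
    have h2 : 2 * Real.sqrt a ≤ Real.sqrt ((1 + d - 1) ^ 2 + 4 * (1 + d) * a) := by
      rw [show ((1:ℝ) + d - 1) = d by ring]
      have := Real.sqrt_le_sqrt (show (2 * Real.sqrt a)^2 ≤ d^2 + 4*(1+d)*a by nlinarith)
      rwa [Real.sqrt_sq (by positivity)] at this
    linarith
end

section
/- For all real x with 0 < x ≤ 1/2 one has (sinh(2x)/(2x))² ≤ 1 + 2x². -/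
theorem stmt_11 (x : ℝ) (hx : 0 < x) (hx' : x ≤ 1 / 2) :
    (Real.sinh (2 * x) / (2 * x)) ^ 2 ≤ 1 + 2 * x ^ 2 := by
  set t : ℝ := 2 * x with ht
  have ht0 : 0 < t := by positivity
  have ht1 : t ≤ 1 := by simp only [ht]; linarith
  have hteq : t = 2 * x := ht
  clear_value t
  have h1 := Real.exp_bound' ht0.le ht1 (n := 6) (by norm_num)
  have habs : |(-t)| ≤ 1 := by rw [abs_neg, abs_of_pos ht0]; exact ht1
  have h2 := (abs_sub_le_iff.1 (Real.exp_bound habs (n := 6) (by norm_num))).2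
  rw [abs_neg, abs_of_pos ht0] at h2
  simp only [Finset.sum_range_succ, Finset.sum_range_zero, Nat.factorial] at h1 h2
  norm_num at h1 h2
  have hs : Real.sinh t ≤ t + t ^ 3 / 6 + t ^ 5 / 120 + 7 * t ^ 6 / 2160 := by
    rw [Real.sinh_eq]
    ring_nf at h2
    linarith [h1, h2, pow_nonneg ht0.le 6]
  have hs0 : 0 < Real.sinh t := Real.sinh_pos_iff.2 ht0
  have key : Real.sinh t ^ 2 ≤ t ^ 2 + t ^ 4 / 2 := by
    have p5 : t ^ 5 ≤ t ^ 4 := pow_le_pow_of_le_one ht0.le ht1 (by norm_num)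
    have p6 : t ^ 6 ≤ t ^ 4 := pow_le_pow_of_le_one ht0.le ht1 (by norm_num)
    have p7 : t ^ 7 ≤ t ^ 4 := pow_le_pow_of_le_one ht0.le ht1 (by norm_num)
    have p8 : t ^ 8 ≤ t ^ 4 := pow_le_pow_of_le_one ht0.le ht1 (by norm_num)
    have p9 : t ^ 9 ≤ t ^ 4 := pow_le_pow_of_le_one ht0.le ht1 (by norm_num)
    have p10 : t ^ 10 ≤ t ^ 4 := pow_le_pow_of_le_one ht0.le ht1 (by norm_num)
    have p11 : t ^ 11 ≤ t ^ 4 := pow_le_pow_of_le_one ht0.le ht1 (by norm_num)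
    have p12 : t ^ 12 ≤ t ^ 4 := pow_le_pow_of_le_one ht0.le ht1 (by norm_num)
    have hb : (t + t ^ 3 / 6 + t ^ 5 / 120 + 7 * t ^ 6 / 2160) ^ 2 ≤ t ^ 2 + t ^ 4 / 2 := by
      nlinarith [p5, p6, p7, p8, p9, p10, p11, p12, ht0.le]
    calc Real.sinh t ^ 2 ≤ (t + t ^ 3 / 6 + t ^ 5 / 120 + 7 * t ^ 6 / 2160) ^ 2 :=
          pow_le_pow_left₀ hs0.le hs 2
      _ ≤ t ^ 2 + t ^ 4 / 2 := hb
  rw [div_pow, div_le_iff₀ (by positivity)]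
  have heq : t ^ 2 + t ^ 4 / 2 = (1 + 2 * x ^ 2) * t ^ 2 := by rw [hteq]; ring
  linarith [heq ▸ key]
end

section
/- Let a ∈ (0,1). For v ∈ (√a, 1), the expression (v(v²-a)+2v)/√((v²-a)²+4v²) - v equals 2v/√((v²-a)²+4v²) - 4v³/((v²-a)² + 4v² + (v²-a)√((v²-a)²+4v²)), and this is at most 1 - (4/(5+√5))·v. -/
/-!
With `b = v² - a` and `S = √(b² + 4v²)`, the identity is `v (b - S) / S = v (b² - S²) / (S (S + b))`
together with `S² - b² = 4v²`. For the bound, Cauchy–Schwarz on `(b, 2v)·(v, 1)` gives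
`v (b + 2) ≤ S √(v² + 1)`, and `√(v² + 1) ≤ 1 + v / √5` for `0 ≤ v ≤ √5 / 2`; finally
`4 / (5 + √5) = 1 - 1 / √5`.
-/

open Real

lemma mul_add_two_mul_div_sqrt_sub_eq (b : ℝ) {v : ℝ} (hv : v ≠ 0) :
    (v * b + 2 * v) / √(b ^ 2 + 4 * v ^ 2) - v
      = 2 * v / √(b ^ 2 + 4 * v ^ 2)
        - 4 * v ^ 3 / (b ^ 2 + 4 * v ^ 2 + b * √(b ^ 2 + 4 * v ^ 2)) := by
  set S := √(b ^ 2 + 4 * v ^ 2) with hS_def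
  have hS_sq : S ^ 2 = b ^ 2 + 4 * v ^ 2 := sq_sqrt (by positivity)
  have hb_lt_S : |b| < S := by
    rw [hS_def, ← sqrt_sq_eq_abs]
    exact sqrt_lt_sqrt (sq_nonneg b) (lt_add_of_pos_right _ (by positivity))
  have hS : 0 < S := (abs_nonneg b).trans_lt hb_lt_S
  have hS_add_b : 0 < S + b := by linarith [neg_abs_le b]
  have hden : b ^ 2 + 4 * v ^ 2 + b * S = S * (S + b) := by rw [← hS_sq]; ring
  rw [hden]
  field_simp
  linear_combination -hS_sq

lemma mul_add_two_mul_le_sqrt_mul_sqrt (b v : ℝ) :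
    v * b + 2 * v ≤ √(v ^ 2 + 1) * √(b ^ 2 + 4 * v ^ 2) := by
  rw [← sqrt_mul (by positivity)]
  refine (le_abs_self _).trans (abs_le_sqrt ?_)
  nlinarith [sq_nonneg (b - 2 * v ^ 2)]

lemma mul_add_two_mul_div_sqrt_le (b v : ℝ) :
    (v * b + 2 * v) / √(b ^ 2 + 4 * v ^ 2) ≤ √(v ^ 2 + 1) :=
  div_le_of_le_mul₀ (sqrt_nonneg _) (sqrt_nonneg _) (mul_add_two_mul_le_sqrt_mul_sqrt b v)

lemma sqrt_sq_add_one_le {v : ℝ} (hv₀ : 0 ≤ v) (hv : 2 * v ≤ √5) :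
    √(v ^ 2 + 1) ≤ 1 + v / √5 := by
  have h5 : √5 ^ 2 = 5 := sq_sqrt (by norm_num)
  have hpos : 0 < √5 := by positivity
  set t := v / √5 with ht
  have hvt : v = √5 * t := by rw [ht]; field_simp
  have ht₀ : 0 ≤ t := by positivity
  have ht₁ : 2 * t ≤ 1 := by
    rw [hvt] at hv; nlinarith
  rw [sqrt_le_iff, hvt, mul_pow, h5]
  exact ⟨by positivity, by nlinarith⟩

lemma four_div_five_add_sqrt_five : 4 / (5 + √5) = 1 - 1 / √5 := by
  have h5 : √5 ^ 2 = 5 := sq_sqrt (by norm_num)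
  have hpos : 0 < √5 := by positivity
  field_simp
  linear_combination -h5

theorem stmt_14_general (a : ℝ)
    (v : ℝ) (hv : v ∈ Set.Ioo (Real.sqrt a) 1) :
    (v * (v ^ 2 - a) + 2 * v) / Real.sqrt ((v ^ 2 - a) ^ 2 + 4 * v ^ 2) - v
      = 2 * v / Real.sqrt ((v ^ 2 - a) ^ 2 + 4 * v ^ 2)
        - 4 * v ^ 3 / ((v ^ 2 - a) ^ 2 + 4 * v ^ 2
            + (v ^ 2 - a) * Real.sqrt ((v ^ 2 - a) ^ 2 + 4 * v ^ 2)) ∧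
    (v * (v ^ 2 - a) + 2 * v) / Real.sqrt ((v ^ 2 - a) ^ 2 + 4 * v ^ 2) - v
      ≤ 1 - 4 / (5 + Real.sqrt 5) * v := by
  obtain ⟨hav, hv₁⟩ := hv
  have hv₀ : 0 < v := (sqrt_nonneg a).trans_lt hav
  have h2v : 2 * v ≤ √5 := by
    have : (2 : ℝ) ≤ √5 := le_sqrt_of_sq_le (by norm_num)
    linarith
  refine ⟨mul_add_two_mul_div_sqrt_sub_eq _ hv₀.ne', ?_⟩
  calc (v * (v ^ 2 - a) + 2 * v) / √((v ^ 2 - a) ^ 2 + 4 * v ^ 2) - v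
      ≤ √(v ^ 2 + 1) - v := by gcongr; exact mul_add_two_mul_div_sqrt_le _ v
    _ ≤ 1 + v / √5 - v := by gcongr; exact sqrt_sq_add_one_le hv₀.le h2v
    _ = 1 - 4 / (5 + √5) * v := by
      rw [four_div_five_add_sqrt_five]; ring

theorem stmt_14 (a : ℝ) (ha : a ∈ Set.Ioo (0 : ℝ) 1)
    (v : ℝ) (hv : v ∈ Set.Ioo (Real.sqrt a) 1) :
    (v * (v ^ 2 - a) + 2 * v) / Real.sqrt ((v ^ 2 - a) ^ 2 + 4 * v ^ 2) - v
      = 2 * v / Real.sqrt ((v ^ 2 - a) ^ 2 + 4 * v ^ 2)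
        - 4 * v ^ 3 / ((v ^ 2 - a) ^ 2 + 4 * v ^ 2
            + (v ^ 2 - a) * Real.sqrt ((v ^ 2 - a) ^ 2 + 4 * v ^ 2)) ∧
    (v * (v ^ 2 - a) + 2 * v) / Real.sqrt ((v ^ 2 - a) ^ 2 + 4 * v ^ 2) - v
      ≤ 1 - 4 / (5 + Real.sqrt 5) * v :=
  stmt_14_general a v hv
end

section
/- Let f : ℝⁿ → ℝ be μ-strongly convex and L-smooth with 0 < μ ≤ L. Fix γ ∈ (0, 2/L), Δ = γ(1 - Lγ/2), and A, B > 0. Let ξ ∈ [2μΔ, 1) satisfy ξ(ξ - 2μΔ)/(1-ξ) = 4Δ·B/A, and set α = (ξ - 2μΔ)/(1 - 2μΔ), β = 1 - 2μΔ/ξ, η = 2Δ/ξ. Given y, z ∈ ℝⁿ, define x = y + α(z - y), y' = x - γ∇f(x), z' = x + β(z - x) - η∇f(x). Then for any minimizer x* of f: f(y') - f(x*) + (ξ²/(4Δ))·‖z' - x*‖² ≤ (1-ξ)·(f(y) - f(x*) + (B/A)·‖z - x*‖²). -/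
/-!
With `c = 2μΔ`, the extrapolated point satisfies `ξ (z' - x*) = w - 2Δ ∇f(x)` where
`w = c (x - x*) + (ξ - c) (z - x*)`, and the choice of `α` makes
`⟪∇f(x), w⟫ = ξ ⟪∇f(x), x - x*⟫ + (1 - ξ) ⟪∇f(x), x - y⟫`. Expanding `‖w - 2Δ ∇f(x)‖²`, bound
`‖w‖²` by convexity of `‖·‖²`, the cross term by strong convexity at `x*` and convexity at `y`,
and absorb `4Δ² ‖∇f(x)‖²` with the descent `f(y') ≤ f(x) - Δ ‖∇f(x)‖²` of the gradient step.
The `μ ‖x - x*‖²` terms cancel exactly because `c = 2μΔ`, and the equation for `ξ` turns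
`ξ (ξ - c) / (4Δ)` into `(1 - ξ) B / A`.
-/

open scoped InnerProductSpace

variable {E : Type*} [NormedAddCommGroup E] [InnerProductSpace ℝ E]

theorem norm_smul_add_smul_sq_le {a b : ℝ} (ha : 0 ≤ a) (hb : 0 ≤ b) (u v : E) :
    ‖a • u + b • v‖ ^ 2 ≤ (a + b) * (a * ‖u‖ ^ 2 + b * ‖v‖ ^ 2) := by
  have hgap : (a + b) * (a * ‖u‖ ^ 2 + b * ‖v‖ ^ 2) - ‖a • u + b • v‖ ^ 2
      = a * b * ‖u - v‖ ^ 2 := by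
    rw [norm_add_sq_real, norm_sub_sq_real, norm_smul, norm_smul, real_inner_smul_left,
      real_inner_smul_right, Real.norm_of_nonneg ha, Real.norm_of_nonneg hb]
    ring
  nlinarith [mul_nonneg (mul_nonneg ha hb) (sq_nonneg ‖u - v‖)]

section Gradient

variable {f : E → ℝ} {g : E → E}

theorem le_sub_of_gradient_step {L : ℝ}
    (hsm : ∀ u v, f u ≤ f v + ⟪g v, u - v⟫_ℝ + L / 2 * ‖u - v‖ ^ 2) (γ : ℝ) (x : E) :
    f (x - γ • g x) ≤ f x - γ * (1 - L * γ / 2) * ‖g x‖ ^ 2 := by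
  have h := hsm (x - γ • g x) x
  rw [sub_sub_cancel_left, norm_neg, norm_smul, Real.norm_eq_abs, mul_pow, sq_abs,
    inner_neg_right, real_inner_smul_right, real_inner_self_eq_norm_sq] at h
  linarith

theorem sub_add_le_inner_of_strongly_convex {μ : ℝ}
    (hsc : ∀ u v, f u ≥ f v + ⟪g v, u - v⟫_ℝ + μ / 2 * ‖u - v‖ ^ 2) (u v : E) :
    f v - f u + μ / 2 * ‖v - u‖ ^ 2 ≤ ⟪g v, v - u⟫_ℝ := by
  have h := hsc u v
  rw [← neg_sub v u, inner_neg_right, norm_neg] at h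
  linarith

theorem smul_sub_eq_of_momentum {ξ c α : ℝ} (hα : α * (1 - c) = ξ - c) (y z : E) :
    (ξ - c) • (z - (y + α • (z - y))) = (1 - ξ) • (y + α • (z - y) - y) := by
  linear_combination (norm := module) -(hα • (z - y))

theorem smul_sub_eq_of_extrapolation {ξ c d β η : ℝ} (hβ : ξ * β = ξ - c) (hη : ξ * η = d)
    (x z v xstar : E) :
    ξ • (x + β • (z - x) - η • v - xstar) = c • (x - xstar) + (ξ - c) • (z - xstar) - d • v := by
  linear_combination (norm := module) hβ • (z - x) - hη • v

theorem nesterov_step_potential_le {μ L γ Δ ξ α β η : ℝ}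
    (hsc : ∀ u v, f u ≥ f v + ⟪g v, u - v⟫_ℝ + μ / 2 * ‖u - v‖ ^ 2)
    (hsm : ∀ u v, f u ≤ f v + ⟪g v, u - v⟫_ℝ + L / 2 * ‖u - v‖ ^ 2)
    (hμ : 0 ≤ μ) (hΔ : Δ = γ * (1 - L * γ / 2)) (hΔ0 : 0 ≤ Δ)
    (hcξ : 2 * μ * Δ ≤ ξ) (hξ1 : ξ ≤ 1)
    (hα : α * (1 - 2 * μ * Δ) = ξ - 2 * μ * Δ) (hβ : ξ * β = ξ - 2 * μ * Δ) (hη : ξ * η = 2 * Δ)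
    {y z x y' z' : E} (xstar : E)
    (hx : x = y + α • (z - y)) (hy' : y' = x - γ • g x) (hz' : z' = x + β • (z - x) - η • g x) :
    4 * Δ * (f y' - f xstar) + ξ ^ 2 * ‖z' - xstar‖ ^ 2
      ≤ 4 * Δ * (1 - ξ) * (f y - f xstar) + ξ * (ξ - 2 * μ * Δ) * ‖z - xstar‖ ^ 2 := by
  set c := 2 * μ * Δ
  set w := c • (x - xstar) + (ξ - c) • (z - xstar)
  have hc : 0 ≤ c := by positivity
  have hξ : 0 ≤ ξ := hc.trans hcξ
  have hsplit : ξ • (z' - xstar) = w - (2 * Δ) • g x := by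
    rw [hz']; exact smul_sub_eq_of_extrapolation hβ hη x z (g x) xstar
  have hw_inner : ⟪g x, w⟫_ℝ = ξ * ⟪g x, x - xstar⟫_ℝ + (1 - ξ) * ⟪g x, x - y⟫_ℝ := by
    have hmom := congrArg (⟪g x, ·⟫_ℝ) (smul_sub_eq_of_momentum hα y z)
    rw [← hx] at hmom
    simp only [w, inner_add_right, real_inner_smul_right, inner_sub_right] at hmom ⊢
    linear_combination hmom
  have hw_norm : ‖w‖ ^ 2 ≤ ξ * (c * ‖x - xstar‖ ^ 2 + (ξ - c) * ‖z - xstar‖ ^ 2) := by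
    simpa using norm_smul_add_smul_sq_le hc (sub_nonneg.2 hcξ) (x - xstar) (z - xstar)
  have hexpand : ξ ^ 2 * ‖z' - xstar‖ ^ 2
      = ‖w‖ ^ 2 - 4 * Δ * ⟪g x, w⟫_ℝ + 4 * Δ ^ 2 * ‖g x‖ ^ 2 := by
    rw [← sq_abs ξ, ← Real.norm_eq_abs, ← mul_pow, ← norm_smul, hsplit, norm_sub_sq_real,
      real_inner_smul_right, real_inner_comm, norm_smul, Real.norm_eq_abs, mul_pow, sq_abs]
    ring
  have hdescent : f y' ≤ f x - Δ * ‖g x‖ ^ 2 := hΔ ▸ hy' ▸ le_sub_of_gradient_step hsm γ x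
  have hstar := sub_add_le_inner_of_strongly_convex hsc xstar x
  have hconv : f x - f y ≤ ⟪g x, x - y⟫_ℝ := by
    have := sub_add_le_inner_of_strongly_convex hsc y x
    nlinarith [sq_nonneg ‖x - y‖]
  have h1 := mul_le_mul_of_nonneg_left hdescent (by positivity : 0 ≤ 4 * Δ)
  have h2 := mul_le_mul_of_nonneg_left hstar (by positivity : 0 ≤ 4 * Δ * ξ)
  have h3 := mul_le_mul_of_nonneg_left hconv (by nlinarith : 0 ≤ 4 * Δ * (1 - ξ))
  linear_combination hw_norm + h1 + h2 + h3 + hexpand - 4 * Δ * hw_inner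

end Gradient

theorem stmt_16_general {n : ℕ} (f : EuclideanSpace ℝ (Fin n) → ℝ)
    (g : EuclideanSpace ℝ (Fin n) → EuclideanSpace ℝ (Fin n))
    (μ L : ℝ) (hμ : 0 < μ)
    (hsc : ∀ u v, f u ≥ f v + inner ℝ (g v) (u - v) + μ / 2 * ‖u - v‖ ^ 2)
    (hsm : ∀ u v, f u ≤ f v + inner ℝ (g v) (u - v) + L / 2 * ‖u - v‖ ^ 2)
    (γ : ℝ) (hγ : γ ∈ Set.Ioo 0 (2 / L))
    (Δ : ℝ) (hΔ : Δ = γ * (1 - L * γ / 2))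
    (A B : ℝ)
    (ξ : ℝ) (hξ : ξ ∈ Set.Ico (2 * μ * Δ) 1)
    (hξeq : ξ * (ξ - 2 * μ * Δ) / (1 - ξ) = 4 * Δ * B / A)
    (α β η : ℝ)
    (hα : α = (ξ - 2 * μ * Δ) / (1 - 2 * μ * Δ))
    (hβ : β = 1 - 2 * μ * Δ / ξ)
    (hη : η = 2 * Δ / ξ)
    (y z x y' z' xstar : EuclideanSpace ℝ (Fin n))
    (hx : x = y + α • (z - y))
    (hy' : y' = x - γ • g x)
    (hz' : z' = x + β • (z - x) - η • g x) :
    f y' - f xstar + ξ ^ 2 / (4 * Δ) * ‖z' - xstar‖ ^ 2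
      ≤ (1 - ξ) * (f y - f xstar + B / A * ‖z - xstar‖ ^ 2) := by
  obtain ⟨hγ0, hγL⟩ := hγ
  obtain ⟨hcξ, hξ1⟩ := hξ
  have hL : 0 < L := by
    by_contra! hL
    exact (div_nonpos_of_nonneg_of_nonpos zero_le_two hL).not_gt (hγ0.trans hγL)
  have hΔ0 : 0 < Δ := by
    rw [lt_div_iff₀ hL] at hγL
    rw [hΔ]; nlinarith
  have hξ0 : 0 < ξ := lt_of_lt_of_le (by positivity) hcξ
  have hratio : ξ * (ξ - 2 * μ * Δ) = 4 * Δ * (1 - ξ) * (B / A) := by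
    rw [div_eq_iff (sub_ne_zero.2 hξ1.ne')] at hξeq
    linear_combination hξeq
  have key := nesterov_step_potential_le (xstar := xstar) hsc hsm hμ.le hΔ hΔ0.le hcξ hξ1.le
    (by rw [hα]; exact div_mul_cancel₀ _ (by linarith))
    (by rw [hβ]; field_simp) (by rw [hη]; field_simp) hx hy' hz'
  rw [hratio] at key
  calc f y' - f xstar + ξ ^ 2 / (4 * Δ) * ‖z' - xstar‖ ^ 2
      = (4 * Δ * (f y' - f xstar) + ξ ^ 2 * ‖z' - xstar‖ ^ 2) / (4 * Δ) := by
        field_simp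
    _ ≤ (4 * Δ * (1 - ξ) * (f y - f xstar) + 4 * Δ * (1 - ξ) * (B / A) * ‖z - xstar‖ ^ 2)
          / (4 * Δ) := by gcongr
    _ = (1 - ξ) * (f y - f xstar + B / A * ‖z - xstar‖ ^ 2) := by
        field_simp

theorem stmt_16 {n : ℕ} (f : EuclideanSpace ℝ (Fin n) → ℝ)
    (g : EuclideanSpace ℝ (Fin n) → EuclideanSpace ℝ (Fin n))
    (hdiff : ∀ u, HasGradientAt f (g u) u)
    (μ L : ℝ) (hμ : 0 < μ) (hμL : μ ≤ L)
    (hsc : ∀ u v, f u ≥ f v + inner ℝ (g v) (u - v) + μ / 2 * ‖u - v‖ ^ 2)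
    (hsm : ∀ u v, f u ≤ f v + inner ℝ (g v) (u - v) + L / 2 * ‖u - v‖ ^ 2)
    (γ : ℝ) (hγ : γ ∈ Set.Ioo 0 (2 / L))
    (Δ : ℝ) (hΔ : Δ = γ * (1 - L * γ / 2))
    (A B : ℝ) (hA : 0 < A) (hB : 0 < B)
    (ξ : ℝ) (hξ : ξ ∈ Set.Ico (2 * μ * Δ) 1)
    (hξeq : ξ * (ξ - 2 * μ * Δ) / (1 - ξ) = 4 * Δ * B / A)
    (α β η : ℝ)
    (hα : α = (ξ - 2 * μ * Δ) / (1 - 2 * μ * Δ))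
    (hβ : β = 1 - 2 * μ * Δ / ξ)
    (hη : η = 2 * Δ / ξ)
    (y z x y' z' xstar : EuclideanSpace ℝ (Fin n))
    (hx : x = y + α • (z - y))
    (hy' : y' = x - γ • g x)
    (hz' : z' = x + β • (z - x) - η • g x)
    (hmin : ∀ u, f xstar ≤ f u) :
    f y' - f xstar + ξ ^ 2 / (4 * Δ) * ‖z' - xstar‖ ^ 2
      ≤ (1 - ξ) * (f y - f xstar + B / A * ‖z - xstar‖ ^ 2) :=
  stmt_16_general f g μ L hμ hsc hsm γ hγ Δ hΔ A B ξ hξ hξeq α β η hα hβ hη y z x y' z' xstar hx hy'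
    hz'
end

section
/- Let a ∈ (0,1) and let (ξₜ) satisfy ξ_{t+1}(ξ_{t+1} - a)/(1 - ξ_{t+1}) = ξₜ² with ξ_{t+1} ∈ [a,1), starting from ξ₀ ≥ √a. Then ξₜ ≥ √a for all t, and consequently ∏_{i=1}^{t} (1 - ξᵢ) ≤ (1 - √a)ᵗ ≤ exp(-t√a). -/
theorem stmt_17 (a : ℝ) (ha : a ∈ Set.Ioo (0 : ℝ) 1)
    (ξ : ℕ → ℝ) (h0 : Real.sqrt a ≤ ξ 0)
    (hmem : ∀ t, ξ (t + 1) ∈ Set.Ico a 1)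
    (hrec : ∀ t, ξ (t + 1) * (ξ (t + 1) - a) / (1 - ξ (t + 1)) = (ξ t) ^ 2) :
    (∀ t : ℕ, Real.sqrt a ≤ ξ t) ∧
      ∀ t : ℕ,
        (∏ i ∈ Finset.Icc 1 t, (1 - ξ i)) ≤ (1 - Real.sqrt a) ^ t ∧
          (1 - Real.sqrt a) ^ t ≤ Real.exp (-(t : ℝ) * Real.sqrt a) := by
  obtain ⟨ha0, ha1⟩ := ha
  have hsa : Real.sqrt a ^ 2 = a := Real.sq_sqrt ha0.le
  have hsa0 : 0 < Real.sqrt a := Real.sqrt_pos.mpr ha0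
  have hsa1 : Real.sqrt a < 1 := by
    rw [show (1:ℝ) = Real.sqrt 1 by simp]
    exact Real.sqrt_lt_sqrt ha0.le ha1
  have hlb : ∀ t, Real.sqrt a ≤ ξ t := by
    intro t
    induction t with
    | zero => exact h0
    | succ n ih =>
      obtain ⟨hmemL, hmemR⟩ := hmem n
      have hpos : 0 < 1 - ξ (n + 1) := by linarith
      have hrec' : ξ (n + 1) * (ξ (n + 1) - a) = (ξ n) ^ 2 * (1 - ξ (n + 1)) := by
        have := hrec n
        field_simp at this
        linarith [this]
      have hn2 : a ≤ (ξ n) ^ 2 := by nlinarith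
      have hx2 : a ≤ ξ (n + 1) ^ 2 := by nlinarith
      have : Real.sqrt a ≤ Real.sqrt (ξ (n + 1) ^ 2) := Real.sqrt_le_sqrt hx2
      rwa [Real.sqrt_sq (by linarith : (0:ℝ) ≤ ξ (n+1))] at this
  refine ⟨hlb, fun t => ⟨?_, ?_⟩⟩
  · calc (∏ i ∈ Finset.Icc 1 t, (1 - ξ i)) ≤ ∏ i ∈ Finset.Icc 1 t, (1 - Real.sqrt a) := by
          apply Finset.prod_le_prod
          · intro i hi
            rcases Nat.exists_eq_add_of_le (Finset.mem_Icc.mp hi).1 with ⟨k, rfl⟩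
            have h2 : ξ (1 + k) < 1 := by rw [add_comm]; exact (hmem k).2
            linarith
          · intro i hi; linarith [hlb i]
      _ = (1 - Real.sqrt a) ^ t := by
          rw [Finset.prod_const, Nat.card_Icc]; norm_num
  · have h1 : 1 - Real.sqrt a ≤ Real.exp (-Real.sqrt a) := by
      linarith [Real.add_one_le_exp (-Real.sqrt a)]
    calc (1 - Real.sqrt a) ^ t ≤ Real.exp (-Real.sqrt a) ^ t :=
          pow_le_pow_left₀ (by linarith) h1 t
      _ = Real.exp (-(t : ℝ) * Real.sqrt a) := by
          rw [← Real.exp_nat_mul]; ring_nf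
end

section
/- Let a ∈ (0,1), δ ≥ 1, and let τ(v) = (√((v²/δ - a)² + 4v²/δ) - (v²/δ - a))/2. If v > √a and τ(v) > √a, then τ(v) - √a < (1 - (4/(5+√5))·a)·(v - √a). -/
private lemma stmt18_poly (s T : ℝ) (hs0 : 0 < s) (hsT : s < T) (hT1 : T < 1) :
    T * (T - s ^ 2) * (1 - T) ≤ (T * (1 + s - s ^ 2) - s ^ 3) ^ 2 := by
  nlinarith [sq_nonneg (T - s), sq_nonneg (T * (1 + s) - s ^ 2),
    mul_pos hs0 (sub_pos.mpr hsT), sq_nonneg (T - s ^ 2),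
    mul_nonneg (mul_nonneg hs0.le (sub_nonneg.mpr hsT.le)) (sub_nonneg.mpr hT1.le),
    mul_nonneg (sub_nonneg.mpr hsT.le) (sub_nonneg.mpr hT1.le),
    sq_nonneg (1 - s), sq_nonneg (1 - T)]

private lemma stmt18_core (s T w u c : ℝ) (hs0 : 0 < s) (hs1 : s < 1)
    (hsT : s < T) (hw0 : 0 < w)
    (hkey : T ^ 2 + (w - s ^ 2) * T - w = 0)
    (hu2 : u ^ 2 = w) (hu0 : 0 < u)
    (hc : 1 - s ^ 2 < c) :
    T - s < c * (u - s) := by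
  have hT0 : 0 < T := lt_trans hs0 hsT
  have hTs2 : 0 < T - s ^ 2 := by nlinarith
  have hT1 : T < 1 := by nlinarith [mul_pos hT0 hTs2]
  have heq : (w - s ^ 2) * (1 - T) = (T - s) * (T + s) := by linear_combination -hkey
  have hwa : s ^ 2 < w := by
    nlinarith [heq, mul_pos (sub_pos.mpr hsT) (show (0:ℝ) < T + s by linarith),
      sub_pos.mpr hT1]
  have hsu : s < u := by nlinarith [hu2, hwa]
  have hpoly := stmt18_poly s T hs0 hsT hT1
  have hB0 : 0 < T * (1 + s - s ^ 2) - s ^ 3 := by nlinarith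
  have hwT : u ^ 2 * (1 - T) = T * (T - s ^ 2) := by rw [hu2]; linear_combination -hkey
  have husq : (u * (1 - T)) ^ 2 ≤ (T * (1 + s - s ^ 2) - s ^ 3) ^ 2 := by
    calc (u * (1 - T)) ^ 2 = (u ^ 2 * (1 - T)) * (1 - T) := by ring
      _ = T * (T - s ^ 2) * (1 - T) := by rw [hwT]
      _ ≤ _ := hpoly
  have hulin : u * (1 - T) ≤ T * (1 + s - s ^ 2) - s ^ 3 := by
    nlinarith [husq, hB0, mul_nonneg hu0.le (show (0:ℝ) ≤ 1 - T by linarith)]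
  have hmain : (u + s) * (1 - T) ≤ (1 - s ^ 2) * (T + s) := by nlinarith [hulin]
  have hfact : (T - s) * (T + s) = (u - s) * ((u + s) * (1 - T)) := by
    linear_combination -heq + (T - 1) * hu2
  have hchain : (T - s) * (T + s) < (c * (u - s)) * (T + s) := by
    calc (T - s) * (T + s) = (u - s) * ((u + s) * (1 - T)) := hfact
      _ ≤ (u - s) * ((1 - s ^ 2) * (T + s)) := by
          apply mul_le_mul_of_nonneg_left hmain (by linarith)
      _ < (u - s) * (c * (T + s)) := by
          apply mul_lt_mul_of_pos_left _ (by linarith)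
          exact mul_lt_mul_of_pos_right hc (by linarith)
      _ = (c * (u - s)) * (T + s) := by ring
  exact lt_of_mul_lt_mul_right hchain (by linarith)

theorem stmt_18 (a δ : ℝ) (ha : a ∈ Set.Ioo (0 : ℝ) 1) (hδ : 1 ≤ δ)
    (τ : ℝ → ℝ)
    (hτ : ∀ v, τ v = (Real.sqrt ((v ^ 2 / δ - a) ^ 2 + 4 * v ^ 2 / δ) - (v ^ 2 / δ - a)) / 2)
    (v : ℝ) (hv : Real.sqrt a < v) (hτv : Real.sqrt a < τ v) :
    τ v - Real.sqrt a ≤ (1 - 8 * a / (5 + Real.sqrt 5) * (1 / 2)) * (v - Real.sqrt a) ∧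
      τ v - Real.sqrt a < (1 - 4 / (5 + Real.sqrt 5) * a) * (v - Real.sqrt a) := by
  obtain ⟨ha0, ha1⟩ := ha
  set s := Real.sqrt a with hs_def
  have hs0 : 0 < s := Real.sqrt_pos.mpr ha0
  have hs2 : s ^ 2 = a := Real.sq_sqrt ha0.le
  have hs1 : s < 1 := by
    rw [hs_def, show (1:ℝ) = Real.sqrt 1 by simp]
    exact Real.sqrt_lt_sqrt ha0.le ha1
  have hδ0 : (0:ℝ) < δ := lt_of_lt_of_le one_pos hδ
  have hv0 : 0 < v := lt_trans hs0 hv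
  set w := v ^ 2 / δ with hw_def
  have hw0 : 0 < w := div_pos (pow_pos hv0 2) hδ0
  set T := τ v with hT_def
  have hA : (v ^ 2 / δ - a) ^ 2 + 4 * v ^ 2 / δ = (w - a) ^ 2 + 4 * w := by
    rw [hw_def]; ring
  have harg : (0:ℝ) ≤ (w - a) ^ 2 + 4 * w := by positivity
  have hTeq : T = (Real.sqrt ((w - a) ^ 2 + 4 * w) - (w - a)) / 2 := by
    rw [hT_def, hτ v, hA, hw_def]
  have h1 : 2 * T + (w - a) = Real.sqrt ((w - a) ^ 2 + 4 * w) := by rw [hTeq]; ring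
  have h2 : (2 * T + (w - a)) ^ 2 = (w - a) ^ 2 + 4 * w := by
    rw [h1, Real.sq_sqrt harg]
  have hkey : T ^ 2 + (w - s ^ 2) * T - w = 0 := by
    rw [hs2]; linear_combination h2 / 4
  set u := Real.sqrt w with hu_def
  have hu2 : u ^ 2 = w := Real.sq_sqrt hw0.le
  have hu0 : 0 < u := Real.sqrt_pos.mpr hw0
  have huv : u ≤ v := by
    have hwle : w ≤ v ^ 2 := by rw [hw_def]; exact div_le_self (sq_nonneg v) hδ
    calc u = Real.sqrt w := rfl
      _ ≤ Real.sqrt (v ^ 2) := Real.sqrt_le_sqrt hwle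
      _ = v := by rw [Real.sqrt_sq hv0.le]
  have h5 : (2:ℝ) ≤ Real.sqrt 5 := by
    rw [show (2:ℝ) = Real.sqrt 4 by rw [show (4:ℝ) = 2^2 by norm_num, Real.sqrt_sq]; norm_num]
    exact Real.sqrt_le_sqrt (by norm_num)
  have hK0 : (0:ℝ) < 5 + Real.sqrt 5 := by linarith
  have hfrac : 4 / (5 + Real.sqrt 5) < 1 := by rw [div_lt_one hK0]; linarith
  have hfrac0 : 0 < 4 / (5 + Real.sqrt 5) := by positivity
  set c := 1 - 4 / (5 + Real.sqrt 5) * a with hc_def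
  have hc : 1 - s ^ 2 < c := by
    rw [hc_def, hs2]
    nlinarith [hfrac, ha0]
  have hc0 : 0 < c := by
    rw [hc_def]
    nlinarith [hfrac, ha0, ha1]
  have hcore : T - s < c * (u - s) :=
    stmt18_core s T w u c hs0 hs1 hτv hw0 hkey hu2 hu0 hc
  have hlt : T - s < c * (v - s) := by
    calc T - s < c * (u - s) := hcore
      _ ≤ c * (v - s) := by
          apply mul_le_mul_of_nonneg_left (by linarith) hc0.le
  constructor
  · have heqc : (1 - 8 * a / (5 + Real.sqrt 5) * (1 / 2)) = c := by rw [hc_def]; ring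
    rw [heqc]; exact hlt.le
  · exact hlt
end
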